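/- Let X¹ ⊆ X² ⊆ ⋯ be an increasing sequence of Polish spaces such that each inclusion X^i → X^{i+1} is a homeomorphism onto a closed subset, let X = ⋃_n X^n with the final (direct-limit) topology, and let ℬ_X be the σ-algebra of sets B ⊆ X with B ∩ X^i Borel in X^i for every i. Assume each X^i possesses a countable set Φ^i of bounded continuous real-valued functions separating points of X^i. Let Ω^i = C([0,∞) → X^i) with the compact-open topology, Ω the direct limit of the Ω^i, θ_s the shift, and ⋈_s the splicing of paths. Suppose S : X → 2^Ω satisfies: (S1) S(x) is a nonempty compact subset of Ω_x = {w ∈ Ω : w(0) = x} for every x; (S2) {x ∈ X : S(x) ∩ C ≠ ∅} ∈ ℬ_X for every closed C ⊆ Ω; (S3) if w ∈ S(x) and s ≥ 0 then θ_s w ∈ S(w(s)); (S4) if w ∈ S(x) and v ∈ S(w(s)) then w ⋈_s v ∈ S(x); and additionally, for every i there is an integer k_i ≥ i with S(X^i) ⊆ Ω^{k_i}. Then S has a measurable selection 𝔲 with the semigroup property 𝔲(t₂, 𝔲(t₁, x)) = 𝔲(t₁ + t₂, x) for all t₁, t₂ ≥ 0 and all x ∈ X. -/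

import Mathlib

open MeasureTheory Set
open scoped NNReal

noncomputable section

/-- The space `Ω = C([0,∞) → X)` with the compact-open topology. -/
abbrev IPath (X : Type*) [TopologicalSpace X] : Type _ := C(ℝ≥0, X)

variable {X : Type*} [TopologicalSpace X]

/-- The shift `θ_s : w(·) ↦ w(s + ·)`. -/
def shift (s : ℝ≥0) (w : IPath X) : IPath X :=
  w.comp ⟨fun t => s + t, by fun_prop⟩

/-- The splicing `w ⋈_s v` of two paths with `w s = v 0`. -/
def splice (s : ℝ≥0) (w v : IPath X) (h : w s = v 0) : IPath X :=
  ⟨fun t => if t ≤ s then w t else v (t - s), by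
    refine Continuous.if_le w.continuous (v.continuous.comp ?_) continuous_id
      continuous_const ?_
    · exact continuous_id.sub continuous_const
    · intro t ht
      rw [ht, tsub_self]
      exact h⟩

/-- The functional `ζ(w) = ∫₀^∞ e^{-λ t} φ(w(t)) dt`. -/
def zeta (lam : ℝ) (phi : X → ℝ) (w : IPath X) : ℝ :=
  ∫ t in Ioi (0 : ℝ), Real.exp (-lam * t) * phi (w (Real.toNNReal t))

/-- A set of paths in `X` is "limit-closed" (closed in the direct limit topology of
`Ω = lim Ω^i`) if its trace on each path space `Ω^i = {w : range w ⊆ A i}` coincides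
with the trace of a closed subset of the path space of `X`. -/
def LimitClosed {X : Type*} [TopologicalSpace X] (A : ℕ → Set X)
    (C : Set (IPath X)) : Prop :=
  ∀ i, ∃ D : Set (IPath X), IsClosed D ∧
    C ∩ {w : IPath X | range ⇑w ⊆ A i} = D ∩ {w : IPath X | range ⇑w ⊆ A i}

/-!
Krylov's selection argument. Tietze extension along the chain `A i` turns the families `Φ^i`
into countably many bounded continuous functions `G m` separating the points of `X`, hence
into countably many functionals `ζ_{j+1, G m}` on paths, which separate paths by uniqueness of
the Laplace transform. Each such `ζ` satisfies
`ζ (w ⋈_s v) - ζ w = e^{-λ s} (ζ v - ζ (θ_s w))`, so passing from `S x` to the maximisers of `ζ`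
on `S x` preserves (S1)–(S4). Iterating through all the functionals, the decreasing compact sets
shrink to a single path `u x`; (S3) for this limit is the semigroup property, and measurability
survives each step because maximisers can be detected through rational level sets.
-/

section Argmax

variable {Y : Type*}

def argmaxSet (F : Y → ℝ) (K : Set Y) : Set Y := {w ∈ K | IsMaxOn F K w}

lemma argmaxSet_subset (F : Y → ℝ) (K : Set Y) : argmaxSet F K ⊆ K := fun _ hw => hw.1

variable [TopologicalSpace Y] {F : Y → ℝ} {K : Set Y}

lemma exists_isClosed_argmaxSet_eq_inter (hF : Continuous F) (K : Set Y) :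
    ∃ E, IsClosed E ∧ argmaxSet F K = K ∩ E :=
  ⟨⋂ v ∈ K, {w | F v ≤ F w}, isClosed_biInter fun _ _ => isClosed_le continuous_const hF, by
    ext w; simp [argmaxSet, isMaxOn_iff]⟩

lemma isCompact_argmaxSet (hK : IsCompact K) (hF : Continuous F) : IsCompact (argmaxSet F K) := by
  obtain ⟨E, hE, hKE⟩ := exists_isClosed_argmaxSet_eq_inter hF K
  exact hKE ▸ hK.inter_right hE

lemma argmaxSet_nonempty (hK : IsCompact K) (hne : K.Nonempty) (hF : Continuous F) :
    (argmaxSet F K).Nonempty :=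
  hK.exists_isMaxOn hne hF.continuousOn

/-- The right-hand side only involves sets `K ∩ D'` with `D'` closed: this is what makes
the argmax of a measurable compact-valued multimap measurable again. -/
lemma argmaxSet_inter_nonempty_iff {D : Set Y} (hK : IsCompact K) (hne : K.Nonempty)
    (hD : IsClosed D) (hF : Continuous F) :
    (argmaxSet F K ∩ D).Nonempty ↔ ∀ q' q : ℚ, q' < q →
      (K ∩ {w | (q : ℝ) ≤ F w}).Nonempty → (K ∩ (D ∩ {w | (q' : ℝ) ≤ F w})).Nonempty := by
  constructor
  · rintro ⟨w, ⟨hwK, hwmax⟩, hwD⟩ q' q hq ⟨v, hvK, hqv⟩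
    exact ⟨w, hwK, hwD, show (q' : ℝ) ≤ F w from
      (Rat.cast_lt.2 hq).le.trans (hqv.trans (hwmax hvK))⟩
  · intro h
    obtain ⟨w₀, hw₀K, hw₀max⟩ := hK.exists_isMaxOn hne hF.continuousOn
    have hclose : ∀ q' : ℚ, (q' : ℝ) < F w₀ → ∃ w ∈ K ∩ D, (q' : ℝ) ≤ F w := by
      intro q' hq'
      obtain ⟨q, hq'q, hq⟩ := exists_rat_btwn hq'
      obtain ⟨w, hwK, hwD, hw⟩ := h q' q (Rat.cast_lt.1 hq'q) ⟨w₀, hw₀K, hq.le⟩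
      exact ⟨w, ⟨hwK, hwD⟩, hw⟩
    obtain ⟨q', hq'⟩ := exists_rat_lt (F w₀)
    obtain ⟨w, hw, -⟩ := hclose q' hq'
    obtain ⟨w₁, hw₁, hw₁max⟩ := (hK.inter_right hD).exists_isMaxOn ⟨w, hw⟩ hF.continuousOn
    have hw₀w₁ : F w₀ ≤ F w₁ := le_of_forall_rat_lt_imp_le fun q' hq' => by
      obtain ⟨w, hw, hq'w⟩ := hclose q' hq'
      exact hq'w.trans (hw₁max hw)
    exact ⟨w₁, ⟨hw₁.1, fun v hv => (hw₀max hv).trans hw₀w₁⟩, hw₁.2⟩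

end Argmax

lemma IsCompact.nonempty_iInter_of_antitone {Y : Type*} [TopologicalSpace Y] {K₀ : Set Y}
    (hK₀ : IsCompact K₀) {K : ℕ → Set Y} (hK : Antitone K)
    (hrel : ∀ n, ∃ E, IsClosed E ∧ K n = K₀ ∩ E) (hne : ∀ n, (K n).Nonempty) :
    (⋂ n, K n).Nonempty := by
  choose E hE hKE using hrel
  rw [show ⋂ n, K n = K₀ ∩ ⋂ n, E n by simp_rw [hKE, inter_iInter]]
  refine hK₀.inter_iInter_nonempty E hE fun t => ?_
  obtain ⟨w, hw⟩ := hne (t.sup id)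
  refine ⟨w, ((hKE _).subset hw).1, mem_iInter₂.2 fun n hn => ?_⟩
  exact ((hKE n).subset (hK (Finset.le_sup (f := id) hn) hw)).2

section Krylov

variable {α Y : Type*} {F : ℕ → Y → ℝ} {S : α → Set Y}

def krylovIter (F : ℕ → Y → ℝ) (S : α → Set Y) : ℕ → α → Set Y
  | 0 => S
  | n + 1 => fun x => argmaxSet (F n) (krylovIter F S n x)

lemma antitone_krylovIter (x : α) : Antitone fun n => krylovIter F S n x :=
  antitone_nat_of_succ_le fun n => argmaxSet_subset (F n) (krylovIter F S n x)

lemma krylovIter_subset (n : ℕ) (x : α) : krylovIter F S n x ⊆ S x :=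
  antitone_krylovIter x (Nat.zero_le n)

lemma subsingleton_iInter_krylovIter (hsep : ∀ w v, (∀ n, F n w = F n v) → w = v) (x : α) :
    (⋂ n, krylovIter F S n x).Subsingleton := fun w hw v hv =>
  hsep w v fun n => by
    have hw' := mem_iInter.1 hw (n + 1)
    have hv' := mem_iInter.1 hv (n + 1)
    exact le_antisymm (hv'.2 hw'.1) (hw'.2 hv'.1)

variable [TopologicalSpace Y]

lemma exists_isClosed_krylovIter_eq_inter (hF : ∀ n, Continuous (F n)) (x : α) (n : ℕ) :
    ∃ E, IsClosed E ∧ krylovIter F S n x = S x ∩ E := by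
  induction n with
  | zero => exact ⟨univ, isClosed_univ, (inter_univ _).symm⟩
  | succ n ih =>
    obtain ⟨E, hE, hKE⟩ := ih
    obtain ⟨E', hE', hKE'⟩ := exists_isClosed_argmaxSet_eq_inter (hF n) (krylovIter F S n x)
    exact ⟨E ∩ E', hE.inter hE', by rw [← inter_assoc, ← hKE]; exact hKE'⟩

lemma isCompact_krylovIter (hF : ∀ n, Continuous (F n)) (hcpt : ∀ x, IsCompact (S x)) (n : ℕ)
    (x : α) : IsCompact (krylovIter F S n x) := by
  induction n with
  | zero => exact hcpt x
  | succ n ih => exact isCompact_argmaxSet ih (hF n)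

lemma krylovIter_nonempty (hF : ∀ n, Continuous (F n)) (hcpt : ∀ x, IsCompact (S x))
    (hne : ∀ x, (S x).Nonempty) (n : ℕ) (x : α) : (krylovIter F S n x).Nonempty := by
  induction n with
  | zero => exact hne x
  | succ n ih => exact argmaxSet_nonempty (isCompact_krylovIter hF hcpt n x) ih (hF n)

lemma iInter_krylovIter_inter_nonempty (hF : ∀ n, Continuous (F n))
    (hcpt : ∀ x, IsCompact (S x)) {x : α} {D : Set Y} (hD : IsClosed D)
    (h : ∀ n, (krylovIter F S n x ∩ D).Nonempty) : ((⋂ n, krylovIter F S n x) ∩ D).Nonempty := by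
  rw [iInter_inter]
  refine (hcpt x).nonempty_iInter_of_antitone (fun m n hmn => ?_) (fun n => ?_) h
  · exact inter_subset_inter_left D (antitone_krylovIter x hmn)
  · obtain ⟨E, hE, hKE⟩ := exists_isClosed_krylovIter_eq_inter hF x n
    exact ⟨E ∩ D, hE.inter hD, by rw [hKE, inter_assoc]⟩

lemma measurableSet_argmaxSet_inter_nonempty [MeasurableSpace α] {𝒞 : Set (Set Y)}
    (hclosed : ∀ D, IsClosed D → D ∈ 𝒞) (hinter : ∀ C ∈ 𝒞, ∀ D, IsClosed D → C ∩ D ∈ 𝒞)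
    {T : α → Set Y} (hcpt : ∀ x, IsCompact (T x)) (hne : ∀ x, (T x).Nonempty)
    (hloc : ∀ C ∈ 𝒞, ∀ x, ∃ D, IsClosed D ∧ ∀ w ∈ T x, w ∈ C ↔ w ∈ D)
    (hmeas : ∀ C ∈ 𝒞, MeasurableSet {x | (T x ∩ C).Nonempty})
    {G : Y → ℝ} (hG : Continuous G) {C : Set Y} (hC : C ∈ 𝒞) :
    MeasurableSet {x | (argmaxSet G (T x) ∩ C).Nonempty} := by
  have key : ∀ x, (argmaxSet G (T x) ∩ C).Nonempty ↔ ∀ q' q : ℚ, q' < q →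
      (T x ∩ {w | (q : ℝ) ≤ G w}).Nonempty →
        (T x ∩ (C ∩ {w | (q' : ℝ) ≤ G w})).Nonempty := by
    intro x
    obtain ⟨D, hD, hCD⟩ := hloc C hC x
    have h₁ : argmaxSet G (T x) ∩ C = argmaxSet G (T x) ∩ D :=
      ext fun w => and_congr_right fun hw => hCD w (argmaxSet_subset G _ hw)
    have h₂ : ∀ E, T x ∩ (C ∩ E) = T x ∩ (D ∩ E) := fun E =>
      ext fun w => and_congr_right fun hw => and_congr_left' (hCD w hw)
    simp_rw [h₁, argmaxSet_inter_nonempty_iff (hcpt x) (hne x) hD hG, h₂]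
  have hset : {x | (argmaxSet G (T x) ∩ C).Nonempty} = ⋂ (q' : ℚ) (q : ℚ) (_ : q' < q),
      {x | (T x ∩ {w | (q : ℝ) ≤ G w}).Nonempty}ᶜ ∪
        {x | (T x ∩ (C ∩ {w | (q' : ℝ) ≤ G w})).Nonempty} := by
    ext x
    simp only [mem_ofPred_eq, key, mem_iInter, mem_union, mem_compl_iff, imp_iff_not_or]
  rw [hset]
  refine .iInter fun q' => .iInter fun q => .iInter fun _ => .union (.compl ?_) ?_
  · exact hmeas _ (hclosed _ (isClosed_le continuous_const hG))
  · exact hmeas _ (hinter C hC _ (isClosed_le continuous_const hG))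

lemma measurableSet_krylovIter_inter_nonempty [MeasurableSpace α] {𝒞 : Set (Set Y)}
    (hclosed : ∀ D, IsClosed D → D ∈ 𝒞) (hinter : ∀ C ∈ 𝒞, ∀ D, IsClosed D → C ∩ D ∈ 𝒞)
    (hF : ∀ n, Continuous (F n)) (hcpt : ∀ x, IsCompact (S x)) (hne : ∀ x, (S x).Nonempty)
    (hloc : ∀ C ∈ 𝒞, ∀ x, ∃ D, IsClosed D ∧ ∀ w ∈ S x, w ∈ C ↔ w ∈ D)
    (hmeas : ∀ C ∈ 𝒞, MeasurableSet {x | (S x ∩ C).Nonempty}) (n : ℕ) :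
    ∀ C ∈ 𝒞, MeasurableSet {x | (krylovIter F S n x ∩ C).Nonempty} := by
  induction n with
  | zero => exact hmeas
  | succ n ih =>
    refine fun C hC => measurableSet_argmaxSet_inter_nonempty hclosed hinter
      (isCompact_krylovIter hF hcpt n) (krylovIter_nonempty hF hcpt hne n) ?_ ih (hF n) hC
    intro C hC x
    obtain ⟨D, hD, hCD⟩ := hloc C hC x
    exact ⟨D, hD, fun w hw => hCD w (krylovIter_subset n x hw)⟩

lemma measurableSet_preimage_of_iInter_krylovIter_eq [MeasurableSpace α] {𝒞 : Set (Set Y)}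
    (hclosed : ∀ D, IsClosed D → D ∈ 𝒞) (hinter : ∀ C ∈ 𝒞, ∀ D, IsClosed D → C ∩ D ∈ 𝒞)
    (hF : ∀ n, Continuous (F n)) (hcpt : ∀ x, IsCompact (S x)) (hne : ∀ x, (S x).Nonempty)
    (hloc : ∀ C ∈ 𝒞, ∀ x, ∃ D, IsClosed D ∧ ∀ w ∈ S x, w ∈ C ↔ w ∈ D)
    (hmeas : ∀ C ∈ 𝒞, MeasurableSet {x | (S x ∩ C).Nonempty})
    {u : α → Y} (hu : ∀ x, ⋂ n, krylovIter F S n x = {u x}) {C : Set Y} (hC : C ∈ 𝒞) :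
    MeasurableSet (u ⁻¹' C) := by
  have hmem : ∀ x n, u x ∈ krylovIter F S n x := fun x =>
    mem_iInter.1 ((hu x).symm ▸ mem_singleton (u x))
  have hset : u ⁻¹' C = ⋂ n, {x | (krylovIter F S n x ∩ C).Nonempty} := by
    ext x
    simp only [mem_preimage, mem_iInter, mem_ofPred_eq]
    refine ⟨fun hx n => ⟨u x, hmem x n, hx⟩, fun h => ?_⟩
    obtain ⟨D, hD, hCD⟩ := hloc C hC x
    obtain ⟨w, hw, hwD⟩ := iInter_krylovIter_inter_nonempty hF hcpt hD fun n =>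
      (h n).mono fun w hw => ⟨hw.1, (hCD w (krylovIter_subset n x hw.1)).1 hw.2⟩
    rw [hu x, mem_singleton_iff] at hw
    subst hw
    exact (hCD _ (hmem x 0)).2 hwD
  rw [hset]
  exact .iInter fun n => measurableSet_krylovIter_inter_nonempty hclosed hinter hF hcpt hne
    hloc hmeas n C hC

end Krylov

section Semiflow

variable {S : X → Set (IPath X)}

def IsSpliceCompatible (F : IPath X → ℝ) : Prop :=
  ∀ s (w v : IPath X) (h : w s = v 0),
    ∃ c > 0, F (splice s w v h) - F w = c * (F v - F (shift s w))

structure IsShiftSpliceStable (S : X → Set (IPath X)) : Prop where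
  apply_zero : ∀ x, ∀ w ∈ S x, w 0 = x
  shift_mem : ∀ x, ∀ w ∈ S x, ∀ s, shift s w ∈ S (w s)
  splice_mem : ∀ x, ∀ w ∈ S x, ∀ s v, v ∈ S (w s) → ∀ h : w s = v 0, splice s w v h ∈ S x

lemma IsShiftSpliceStable.argmaxSet (hS : IsShiftSpliceStable S) {F : IPath X → ℝ}
    (hF : IsSpliceCompatible F) : IsShiftSpliceStable fun x => argmaxSet F (S x) where
  apply_zero x w hw := hS.apply_zero x w hw.1
  shift_mem x w hw s := by
    refine ⟨hS.shift_mem x w hw.1 s, fun v hv => ?_⟩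
    have h0 : w s = v 0 := (hS.apply_zero _ v hv).symm
    obtain ⟨c, hc, hcF⟩ := hF s w v h0
    have hle : F (splice s w v h0) ≤ F w := hw.2 (hS.splice_mem x w hw.1 s v hv h0)
    have : c * (F v - F (shift s w)) ≤ 0 := hcF ▸ sub_nonpos.2 hle
    exact sub_nonpos.1 (nonpos_of_mul_nonpos_right this hc)
  splice_mem x w hw s v hv h := by
    refine ⟨hS.splice_mem x w hw.1 s v hv.1 h, fun u hu => ?_⟩
    obtain ⟨c, hc, hcF⟩ := hF s w v h
    have hle : F (shift s w) ≤ F v := hv.2 (hS.shift_mem x w hw.1 s)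
    have : 0 ≤ c * (F v - F (shift s w)) := mul_nonneg hc.le (sub_nonneg.2 hle)
    exact (hw.2 hu).trans (sub_nonneg.1 (hcF ▸ this))

lemma IsShiftSpliceStable.krylovIter (hS : IsShiftSpliceStable S) {F : ℕ → IPath X → ℝ}
    (hF : ∀ n, IsSpliceCompatible (F n)) (n : ℕ) : IsShiftSpliceStable (krylovIter F S n) := by
  induction n with
  | zero => exact hS
  | succ n ih => exact ih.argmaxSet (hF n)

theorem exists_semiflow_selection (hS : IsShiftSpliceStable S)
    (hcpt : ∀ x, IsCompact (S x)) (hne : ∀ x, (S x).Nonempty) {F : ℕ → IPath X → ℝ}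
    (hFc : ∀ n, Continuous (F n)) (hFs : ∀ n, IsSpliceCompatible (F n))
    (hsep : ∀ w v, (∀ n, F n w = F n v) → w = v) :
    ∃ u : X → IPath X, (∀ x, ⋂ n, krylovIter F S n x = {u x}) ∧ (∀ x, u x ∈ S x) ∧
      ∀ x (t₁ t₂ : ℝ≥0), u (u x t₁) t₂ = u x (t₁ + t₂) := by
  have hlim : ∀ x, ∃ w, ⋂ n, krylovIter F S n x = {w} := fun x => by
    obtain ⟨w, hw, -⟩ := iInter_krylovIter_inter_nonempty hFc hcpt isClosed_univ fun n =>
      (inter_univ (krylovIter F S n x)).symm ▸ krylovIter_nonempty hFc hcpt hne n x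
    exact ⟨w, (subsingleton_iInter_krylovIter hsep x).eq_singleton_of_mem hw⟩
  choose u hu using hlim
  have hmem : ∀ x n, u x ∈ krylovIter F S n x := fun x =>
    mem_iInter.1 ((hu x).symm ▸ mem_singleton (u x))
  refine ⟨u, hu, fun x => hmem x 0, fun x t₁ t₂ => ?_⟩
  have hshift : shift t₁ (u x) ∈ ⋂ n, krylovIter F S n (u x t₁) := mem_iInter.2 fun n =>
    (hS.krylovIter hFs n).shift_mem x (u x) (hmem x n) t₁
  rw [hu, mem_singleton_iff] at hshift
  rw [← hshift]
  rfl

end Semiflow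

section Laplace

open Real Filter Topology

lemma integrableOn_exp_neg_mul_mul {lam M : ℝ} (hlam : 0 < lam) {ψ : ℝ → ℝ} (hψ : Continuous ψ)
    (hM : ∀ t, |ψ t| ≤ M) (a : ℝ) : IntegrableOn (fun t => exp (-lam * t) * ψ t) (Ioi a) :=
  (exp_neg_integrableOn_Ioi a hlam).mul_bdd hψ.aestronglyMeasurable (ae_of_all _ hM)

variable {h : ℝ → ℝ} {M : ℝ}

lemma continuous_mul_comp_neg_log (hc : Continuous h) (hM : ∀ t, |h t| ≤ M) :
    Continuous fun x => x * h (-log x) := by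
  refine continuous_iff_continuousAt.2 fun x => ?_
  rcases eq_or_ne x 0 with rfl | hx
  · have hbdd : IsBoundedUnder (· ≤ ·) (𝓝 (0 : ℝ)) fun x => ‖h (-log x)‖ :=
      isBoundedUnder_of ⟨M, fun x => hM _⟩
    simpa [ContinuousAt] using tendsto_id.zero_mul_isBoundedUnder_le hbdd
  · exact continuousAt_id.mul (hc.continuousAt.comp (continuousAt_log hx).neg)

lemma integrableOn_exp_neg_mul_mul_comp_exp_neg (hc : Continuous h) (hM : ∀ t, |h t| ≤ M)
    {g : ℝ → ℝ} (hg : Continuous g) :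
    IntegrableOn (fun t => exp (-t) * h t * g (exp (-t))) (Ioi 0) := by
  obtain ⟨C, hC⟩ := isCompact_Icc.exists_bound_of_continuousOn (hg.continuousOn (s := Icc 0 1))
  have hexp : IntegrableOn (fun t => exp (-t) * h t) (Ioi 0) := by
    simpa using integrableOn_exp_neg_mul_mul one_pos hc hM 0
  refine hexp.mul_bdd (by fun_prop : Continuous fun t => g (exp (-t))).aestronglyMeasurable
    ((ae_restrict_iff' measurableSet_Ioi).2 (ae_of_all _ fun t ht => hC _ ?_))
  exact ⟨(exp_pos _).le, exp_le_one_iff.2 (by simpa using (le_of_lt ht))⟩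

lemma integral_exp_neg_mul_mul_eval_eq_zero (hc : Continuous h) (hM : ∀ t, |h t| ≤ M)
    (hz : ∀ n : ℕ, ∫ t in Ioi 0, exp (-(n + 1) * t) * h t = 0) (p : Polynomial ℝ) :
    ∫ t in Ioi 0, exp (-t) * h t * p.eval (exp (-t)) = 0 := by
  have hterm : ∀ i : ℕ, ∀ t, exp (-t) * h t * (p.coeff i * exp (-t) ^ i)
      = p.coeff i * (exp (-(i + 1) * t) * h t) := fun i t => by
    rw [← exp_nat_mul, show -((i : ℝ) + 1) * t = -t + i * -t by ring, exp_add]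
    ring
  simp_rw [Polynomial.eval_eq_sum_range, Finset.mul_sum, hterm]
  rw [integral_finsetSum _ fun i _ =>
    (integrableOn_exp_neg_mul_mul (by positivity) hc hM 0).const_mul (p.coeff i)]
  simp only [integral_const_mul, hz, mul_zero, Finset.sum_const_zero]

/-- Under `x = e^{-t}`, `e^{-t} h(t)` becomes the continuous function `H x = x h(-log x)` on
`[0, 1]`, and the hypothesis says that `H` is orthogonal to all polynomials in `L²(dx / x)`;
Weierstrass approximation of `H` itself gives the claim. -/
lemma integral_exp_neg_mul_sq_le (hc : Continuous h) (hM : ∀ t, |h t| ≤ M)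
    (hz : ∀ n : ℕ, ∫ t in Ioi 0, exp (-(n + 1) * t) * h t = 0) {ε : ℝ} (hε : 0 < ε) :
    ∫ t in Ioi 0, (exp (-t) * h t) ^ 2 ≤ ε := by
  set H : ℝ → ℝ := fun x => x * h (-log x)
  have hHc : Continuous H := continuous_mul_comp_neg_log hc hM
  have hM0 : 0 ≤ M := (abs_nonneg _).trans (hM 0)
  obtain ⟨p, hp⟩ := exists_polynomial_near_of_continuousOn 0 1 H hHc.continuousOn
    (ε / (M + 1)) (by positivity)
  have hbound : ∀ᵐ t ∂volume.restrict (Ioi 0),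
      ‖exp (-t) * h t * H (exp (-t)) - exp (-t) * h t * p.eval (exp (-t))‖
        ≤ exp (-t) * (M * (ε / (M + 1))) := by
    refine (ae_restrict_iff' measurableSet_Ioi).2 (ae_of_all _ fun t ht => ?_)
    have hmem : exp (-t) ∈ Icc (0 : ℝ) 1 :=
      ⟨(exp_pos _).le, exp_le_one_iff.2 (by simpa using (le_of_lt ht))⟩
    calc ‖exp (-t) * h t * H (exp (-t)) - exp (-t) * h t * p.eval (exp (-t))‖
        = exp (-t) * (|h t| * |p.eval (exp (-t)) - H (exp (-t))|) := by
          rw [← mul_sub, norm_mul, norm_mul, Real.norm_of_nonneg (exp_pos _).le,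
            Real.norm_eq_abs, Real.norm_eq_abs, abs_sub_comm, mul_assoc]
      _ ≤ exp (-t) * (M * (ε / (M + 1))) := by
          gcongr
          · exact hM t
          · exact (hp _ hmem).le
  calc ∫ t in Ioi 0, (exp (-t) * h t) ^ 2
      = ∫ t in Ioi 0, (exp (-t) * h t * H (exp (-t)) - exp (-t) * h t * p.eval (exp (-t))) := by
        rw [integral_sub (integrableOn_exp_neg_mul_mul_comp_exp_neg hc hM hHc)
          (integrableOn_exp_neg_mul_mul_comp_exp_neg hc hM p.continuous),
          integral_exp_neg_mul_mul_eval_eq_zero hc hM hz p, sub_zero]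
        simp [H, sq]
    _ ≤ ∫ t in Ioi 0, exp (-t) * (M * (ε / (M + 1))) :=
        (le_abs_self _).trans (norm_integral_le_of_norm_le
          ((integrableOn_exp_neg_Ioi 0).mul_const _) hbound)
    _ ≤ ε := by
        rw [integral_mul_const, integral_exp_neg_Ioi_zero, one_mul, mul_div_left_comm]
        exact mul_le_of_le_one_right hε.le ((div_le_one (by positivity)).2 (by linarith))

theorem eqOn_zero_of_integral_exp_neg_mul_eq_zero (hc : Continuous h) (hM : ∀ t, |h t| ≤ M)
    (hz : ∀ n : ℕ, ∫ t in Ioi 0, exp (-(n + 1) * t) * h t = 0) : EqOn h 0 (Ici 0) := by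
  have hcont : Continuous fun t => (exp (-t) * h t) ^ 2 := by fun_prop
  have hzero : ∫ t in Ioi 0, (exp (-t) * h t) ^ 2 = 0 :=
    le_antisymm (le_of_forall_pos_le_add fun ε hε => by
      simpa using integral_exp_neg_mul_sq_le hc hM hz hε)
      (setIntegral_nonneg measurableSet_Ioi fun t _ => sq_nonneg _)
  have hint : IntegrableOn (fun t => (exp (-t) * h t) ^ 2) (Ioi 0) := by
    simpa [sq] using integrableOn_exp_neg_mul_mul_comp_exp_neg hc hM
      (continuous_mul_comp_neg_log hc hM)
  have hae := (setIntegral_eq_zero_iff_of_nonneg_ae (ae_of_all _ fun t => sq_nonneg _)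
    hint).1 hzero
  rw [Measure.restrict_congr_set Ioi_ae_eq_Ici] at hae
  intro t ht
  have := Measure.eqOn_of_ae_eq hae hcont.continuousOn continuousOn_const
    (by rw [interior_Ici, closure_Ioi]) ht
  simpa [(exp_pos _).ne'] using this

end Laplace

section Zeta

open Real

lemma setIntegral_Ioi_eq_comp_add (f : ℝ → ℝ) (s : ℝ) :
    ∫ t in Ioi s, f t = ∫ t in Ioi 0, f (t + s) := by
  rw [← (measurePreserving_add_right volume s).setIntegral_preimage_emb
    (measurableEmbedding_addRight s), preimage_add_const_Ioi, sub_self]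

lemma shift_splice (s : ℝ≥0) (w v : IPath X) (h : w s = v 0) : shift s (splice s w v h) = v := by
  ext t
  simp only [shift, splice, ContinuousMap.comp_apply, ContinuousMap.coe_mk]
  split_ifs with ht
  · obtain rfl : t = 0 := le_antisymm (by simpa using ht) zero_le
    rw [add_zero, h]
  · rw [add_tsub_cancel_left]

lemma splice_apply_of_le {s t : ℝ≥0} (w v : IPath X) (h : w s = v 0) (ht : t ≤ s) :
    splice s w v h t = w t :=
  if_pos ht

variable {lam M : ℝ} {φ : X → ℝ}

lemma zeta_eq_integral_add_shift (hlam : 0 < lam) (hφ : Continuous φ) (hM : ∀ x, |φ x| ≤ M)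
    (s : ℝ≥0) (w : IPath X) :
    zeta lam φ w = (∫ t in Ioc 0 (s : ℝ), exp (-lam * t) * φ (w t.toNNReal))
      + exp (-lam * s) * zeta lam φ (shift s w) := by
  have hint : ∀ a, IntegrableOn (fun t => exp (-lam * t) * φ (w t.toNNReal)) (Ioi a) :=
    integrableOn_exp_neg_mul_mul hlam (by fun_prop) fun _ => hM _
  rw [zeta, ← Ioc_union_Ioi_eq_Ioi s.coe_nonneg, setIntegral_union (Ioc_disjoint_Ioi le_rfl)
    measurableSet_Ioi ((hint 0).mono_set Ioc_subset_Ioi_self) (hint s),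
    setIntegral_Ioi_eq_comp_add, zeta, ← integral_const_mul]
  congr 1
  refine setIntegral_congr_fun measurableSet_Ioi fun t ht => ?_
  simp only [shift, ContinuousMap.comp_apply, ContinuousMap.coe_mk]
  rw [Real.toNNReal_add (le_of_lt ht) s.coe_nonneg, Real.toNNReal_coe, add_comm _ s,
    mul_add, exp_add]
  ring

lemma zeta_splice_sub (hlam : 0 < lam) (hφ : Continuous φ) (hM : ∀ x, |φ x| ≤ M) (s : ℝ≥0)
    (w v : IPath X) (h : w s = v 0) :
    zeta lam φ (splice s w v h) - zeta lam φ w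
      = exp (-lam * s) * (zeta lam φ v - zeta lam φ (shift s w)) := by
  have hhead : ∫ t in Ioc 0 (s : ℝ), exp (-lam * t) * φ (splice s w v h t.toNNReal)
      = ∫ t in Ioc 0 (s : ℝ), exp (-lam * t) * φ (w t.toNNReal) :=
    setIntegral_congr_fun measurableSet_Ioc fun t ht => by
      rw [splice_apply_of_le w v h (Real.toNNReal_le_iff_le_coe.2 ht.2)]
  rw [zeta_eq_integral_add_shift hlam hφ hM s, zeta_eq_integral_add_shift hlam hφ hM s w,
    shift_splice, hhead]
  ring

lemma isSpliceCompatible_zeta (hlam : 0 < lam) (hφ : Continuous φ) (hM : ∀ x, |φ x| ≤ M) :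
    IsSpliceCompatible (zeta lam φ : IPath X → ℝ) := fun s w v h =>
  ⟨exp (-lam * s), exp_pos _, zeta_splice_sub hlam hφ hM s w v h⟩

lemma continuous_zeta (hlam : 0 < lam) (hφ : Continuous φ) (hM : ∀ x, |φ x| ≤ M) :
    Continuous (zeta lam φ : IPath X → ℝ) := by
  let Z : C(ℝ≥0, ℝ) → ℝ := fun g => ∫ t in Ioi 0, exp (-lam * t) * g t.toNNReal
  have hZ : ContinuousOn Z {g | ∀ t, |g t| ≤ M} := by
    refine continuousOn_of_dominated (bound := fun t => M * exp (-lam * t))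
      (fun g _ => (by fun_prop : Continuous _).aestronglyMeasurable) (fun g hg => ?_)
      ((exp_neg_integrableOn_Ioi 0 hlam).const_mul M) (ae_of_all _ fun t => ?_)
    · refine ae_of_all _ fun t => ?_
      rw [norm_mul, Real.norm_of_nonneg (exp_pos _).le, Real.norm_eq_abs, mul_comm]
      exact mul_le_mul_of_nonneg_right (hg _) (exp_pos _).le
    · exact (continuous_const.mul (continuous_eval_const _)).continuousOn
  exact hZ.comp_continuous (ContinuousMap.continuous_postcomp ⟨φ, hφ⟩) fun w t => hM _

lemma eq_of_forall_zeta_eq {G : ℕ → X → ℝ} (hGc : ∀ m, Continuous (G m))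
    (hGb : ∀ m x, |G m x| ≤ M) (hGsep : ∀ x y, x ≠ y → ∃ m, G m x ≠ G m y) {w v : IPath X}
    (h : ∀ j m : ℕ, zeta (j + 1) (G m) w = zeta (j + 1) (G m) v) : w = v := by
  ext t₀
  by_contra hne
  obtain ⟨m, hm⟩ := hGsep _ _ hne
  have hint : ∀ (u : IPath X) (j : ℕ), IntegrableOn
      (fun t => exp (-((j : ℝ) + 1) * t) * G m (u t.toNNReal)) (Ioi 0) := fun u j =>
    integrableOn_exp_neg_mul_mul (by positivity) (by fun_prop) (fun _ => hGb m _) 0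
  have hzero := eqOn_zero_of_integral_exp_neg_mul_eq_zero
    (h := fun t => G m (w t.toNNReal) - G m (v t.toNNReal)) (by fun_prop)
    (fun t => (abs_sub _ _).trans (add_le_add (hGb m _) (hGb m _))) (fun j => by
      simp_rw [mul_sub]
      rw [integral_sub (hint w j) (hint v j)]
      exact sub_eq_zero.2 (h j m)) (NNReal.coe_nonneg t₀)
  simp only [Real.toNNReal_coe, Pi.zero_apply, sub_eq_zero] at hzero
  exact hm hzero

end Zeta

lemma IsClosed.limitClosed {D : Set (IPath X)} (hD : IsClosed D) (A : ℕ → Set X) :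
    LimitClosed A D :=
  fun _ => ⟨D, hD, rfl⟩

lemma LimitClosed.inter_isClosed {A : ℕ → Set X} {C D : Set (IPath X)} (hC : LimitClosed A C)
    (hD : IsClosed D) : LimitClosed A (C ∩ D) := fun i => by
  obtain ⟨E, hE, hCE⟩ := hC i
  refine ⟨E ∩ D, hE.inter hD, ?_⟩
  rw [inter_right_comm, hCE, inter_right_comm]

lemma LimitClosed.exists_isClosed_mem_iff {A : ℕ → Set X} {C : Set (IPath X)}
    (hC : LimitClosed A C) {K : Set (IPath X)} {i : ℕ} (hK : ∀ w ∈ K, range w ⊆ A i) :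
    ∃ D, IsClosed D ∧ ∀ w ∈ K, w ∈ C ↔ w ∈ D := by
  obtain ⟨D, hD, hCD⟩ := hC i
  refine ⟨D, hD, fun w hw => ?_⟩
  have := congrArg (w ∈ ·) hCD
  simpa [hK w hw] using this

structure IsClosedExhaustion (A : ℕ → Set X) : Prop where
  mono : Monotone A
  iUnion_eq : ⋃ i, A i = univ
  isOpen_iff : ∀ U : Set X, IsOpen U ↔ ∀ i, IsOpen (Subtype.val ⁻¹' U : Set (A i))
  isClosed_succ : ∀ i, IsClosed (Subtype.val ⁻¹' (A i) : Set (A (i + 1)))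

namespace IsClosedExhaustion

variable {A : ℕ → Set X}

lemma exists_mem (hA : IsClosedExhaustion A) (x : X) : ∃ i, x ∈ A i :=
  mem_iUnion.1 (hA.iUnion_eq ▸ mem_univ x)

lemma continuous_of_forall_continuous_domRestrict (hA : IsClosedExhaustion A) {Y : Type*}
    [TopologicalSpace Y] {g : X → Y} (h : ∀ i, Continuous ((A i).domRestrict g)) : Continuous g :=
  continuous_def.2 fun U hU => (hA.isOpen_iff _).2 fun i => (h i).isOpen_preimage U hU

lemma exists_continuous_of_compatible (hA : IsClosedExhaustion A) {Y : Type*}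
    [TopologicalSpace Y] (j : ℕ) (ψ : ∀ m, C(A (j + m), Y))
    (hψ : ∀ m (a : A (j + m)), ψ (m + 1) (inclusion (hA.mono (j + m).le_succ) a) = ψ m a) :
    ∃ g : C(X, Y), ∀ m (a : A (j + m)), g a = ψ m a := by
  have hcompat : ∀ m m' (hmm' : m ≤ m') (a : A (j + m)),
      ψ m' (inclusion (hA.mono (by omega)) a) = ψ m a := by
    intro m m' hmm'
    induction m', hmm' using Nat.le_induction with
    | base => exact fun a => rfl
    | succ m' _ ih => exact fun a => (hψ m' _).trans (ih a)
  choose m hm using fun x => (hA.exists_mem x).imp fun i hi => hA.mono (Nat.le_add_left i j) hi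
  have hg : ∀ n (a : A (j + n)), ψ (m a) ⟨a, hm a⟩ = ψ n a := fun n a =>
    (hcompat _ _ (le_max_left (m a) n) _).symm.trans (hcompat _ _ (le_max_right _ _) a)
  refine ⟨⟨fun x => ψ (m x) ⟨x, hm x⟩,
    hA.continuous_of_forall_continuous_domRestrict fun i => ?_⟩, hg⟩
  have : (A i).domRestrict (fun x => ψ (m x) ⟨x, hm x⟩) =
      ψ i ∘ inclusion (hA.mono (Nat.le_add_left i j)) := funext fun a => hg i (inclusion _ a)
  rw [this]
  exact (ψ i).continuous.comp (continuous_inclusion _)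

variable [∀ i, NormalSpace (A i)]

lemma exists_extension_succ (hA : IsClosedExhaustion A) (i : ℕ) (f : C(A i, ℝ)) :
    ∃ g : C(A (i + 1), ℝ), ∀ a, g (inclusion (hA.mono i.le_succ) a) = f a := by
  obtain ⟨g, hg⟩ := f.exists_extension'
    ⟨.inclusion (hA.mono i.le_succ), by rw [range_inclusion]; exact hA.isClosed_succ i⟩
  exact ⟨g, congrFun hg⟩

lemma exists_extension (hA : IsClosedExhaustion A) {j : ℕ} (f : C(A j, ℝ)) :
    ∃ g : C(X, ℝ), ∀ a : A j, g a = f a := by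
  choose ext hext using hA.exists_extension_succ
  let ψ : ∀ m, C(A (j + m), ℝ) := fun m => Nat.rec (motive := fun m => C(A (j + m), ℝ)) f
    (fun m g => ext (j + m) g) m
  obtain ⟨g, hg⟩ := hA.exists_continuous_of_compatible j ψ fun m => hext (j + m) (ψ m)
  exact ⟨g, hg 0⟩

lemma exists_bounded_separating_family (hA : IsClosedExhaustion A)
    (hΦ : ∀ i, ∃ Φ : ℕ → A i → ℝ, (∀ n, Continuous (Φ n)) ∧
      ∀ a b : A i, a ≠ b → ∃ n, Φ n a ≠ Φ n b) :
    ∃ G : ℕ → X → ℝ, (∀ n, Continuous (G n)) ∧ (∀ n x, |G n x| ≤ Real.pi / 2) ∧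
      ∀ x y, x ≠ y → ∃ n, G n x ≠ G n y := by
  choose Φ hΦc hΦsep using hΦ
  choose g hg using fun i n => hA.exists_extension ⟨Φ i n, hΦc i n⟩
  -- `arctan` makes the extensions bounded without losing injectivity
  refine ⟨fun k => Real.arctan ∘ g k.unpair.1 k.unpair.2,
    fun k => Real.continuous_arctan.comp (g _ _).continuous,
    fun k x => (abs_lt.2 ⟨Real.neg_pi_div_two_lt_arctan _, Real.arctan_lt_pi_div_two _⟩).le,
    fun x y hxy => ?_⟩
  obtain ⟨i, hx⟩ := hA.exists_mem x
  obtain ⟨i', hy⟩ := hA.exists_mem y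
  set a : A (max i i') := ⟨x, hA.mono (le_max_left i i') hx⟩
  set b : A (max i i') := ⟨y, hA.mono (le_max_right i i') hy⟩
  obtain ⟨n, hn⟩ := hΦsep _ a b fun h => hxy (congrArg Subtype.val h)
  refine ⟨Nat.pair (max i i') n, ?_⟩
  simp only [Function.comp_apply, Nat.unpair_pair]
  exact Real.arctan_injective.ne fun h => hn ((hg _ n a).symm.trans (h.trans (hg _ n b)))

end IsClosedExhaustion

theorem generalized_semiflow_selection_general
    {X : Type*} [TopologicalSpace X] [MeasurableSpace X]
    (A : ℕ → Set X) (hmono : Monotone A) (hcover : ⋃ i, A i = univ)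
    (hfinal : ∀ U : Set X, IsOpen U ↔ ∀ i, IsOpen (Subtype.val ⁻¹' U : Set (A i)))
    (hstep : ∀ i, IsClosed (Subtype.val ⁻¹' (A i) : Set (A (i + 1))))
    (hPolish : ∀ i, PolishSpace (A i))
    (hPhi : ∀ i, ∃ Φ : ℕ → (A i → ℝ),
      (∀ n, Continuous (Φ n)) ∧ (∀ n, ∃ M, ∀ a, |Φ n a| ≤ M) ∧
      ∀ a b : A i, a ≠ b → ∃ n, Φ n a ≠ Φ n b)
    (S : X → Set (IPath X))
    (hS1a : ∀ x, (S x).Nonempty)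
    (hS1b : ∀ x, IsCompact (S x))
    (hS1c : ∀ x, ∀ w ∈ S x, w 0 = x)
    (hS2 : ∀ C : Set (IPath X), LimitClosed A C →
      MeasurableSet {x | (S x ∩ C).Nonempty})
    (hS3 : ∀ x, ∀ w ∈ S x, ∀ s : ℝ≥0, shift s w ∈ S (w s))
    (hS4 : ∀ x, ∀ w ∈ S x, ∀ s : ℝ≥0, ∀ v, ∀ hv : v ∈ S (w s),
      splice s w v ((hS1c _ v hv).symm) ∈ S x)
    (hk : ∀ i, ∃ k, i ≤ k ∧ ∀ x ∈ A i, ∀ w ∈ S x, range ⇑w ⊆ A k) :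
    ∃ u : X → IPath X,
      (∀ C : Set (IPath X), LimitClosed A C → MeasurableSet (u ⁻¹' C)) ∧
      (∀ x, u x ∈ S x) ∧
      ∀ x, ∀ t₁ t₂ : ℝ≥0, u (u x t₁) t₂ = u x (t₁ + t₂) := by
  have hA : IsClosedExhaustion A := ⟨hmono, hcover, hfinal, hstep⟩
  have : ∀ i, NormalSpace (A i) := fun i => by have := hPolish i; infer_instance
  obtain ⟨G, hGc, hGb, hGsep⟩ :=
    hA.exists_bounded_separating_family fun i => (hPhi i).imp fun _ hΦ => ⟨hΦ.1, hΦ.2.2⟩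
  set F : ℕ → IPath X → ℝ := fun k => zeta (k.unpair.1 + 1) (G k.unpair.2)
  have hFc : ∀ k, Continuous (F k) := fun k => continuous_zeta (by positivity) (hGc _) (hGb _)
  have hFs : ∀ k, IsSpliceCompatible (F k) := fun k =>
    isSpliceCompatible_zeta (by positivity) (hGc _) (hGb _)
  have hFsep : ∀ w v, (∀ k, F k w = F k v) → w = v := fun w v h =>
    eq_of_forall_zeta_eq hGc hGb hGsep fun j m => by simpa [F] using h (Nat.pair j m)
  have hS : IsShiftSpliceStable S := ⟨hS1c, hS3, fun x w hw s v hv _ => hS4 x w hw s v hv⟩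
  obtain ⟨u, hu, huS, hsemi⟩ := exists_semiflow_selection hS hS1b hS1a hFc hFs hFsep
  have hloc : ∀ C, LimitClosed A C → ∀ x, ∃ D, IsClosed D ∧ ∀ w ∈ S x, w ∈ C ↔ w ∈ D := by
    intro C hC x
    obtain ⟨i, hi⟩ := hA.exists_mem x
    obtain ⟨k, -, hSk⟩ := hk i
    exact hC.exists_isClosed_mem_iff (hSk x hi)
  refine ⟨u, fun C hC => ?_, huS, hsemi⟩
  exact measurableSet_preimage_of_iInter_krylovIter_eq (𝒞 := {C | LimitClosed A C})
    (fun D hD => hD.limitClosed A) (fun C hC D hD => hC.inter_isClosed hD) hFc hS1b hS1a hloc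
    hS2 hu hC

/-- **Generalized semiflow selection theorem** (direct limits of Polish spaces).
`X = ⋃ i, A i` is the direct limit of an increasing sequence of Polish spaces `A i`,
each closed in the next, carrying the final topology and the σ-algebra `ℬ_X` of sets
whose trace on each `A i` is Borel; each `A i` has a countable family of bounded
continuous functions separating its points.  If `S : X → 2^Ω` has nonempty compact
values `S x ⊆ Ω_x` (S1), is closed-measurable (S2), is shift-compatible (S3), is
stable under splicing (S4), and maps each `A i` into some `Ω^{k i}`, then `S` has a
measurable selection with the semigroup property. -/
theorem generalized_semiflow_selection
    {X : Type*} [TopologicalSpace X] [MeasurableSpace X]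
    (A : ℕ → Set X) (hmono : Monotone A) (hcover : ⋃ i, A i = univ)
    (hfinal : ∀ U : Set X, IsOpen U ↔ ∀ i, IsOpen (Subtype.val ⁻¹' U : Set (A i)))
    (hstep : ∀ i, IsClosed (Subtype.val ⁻¹' (A i) : Set (A (i + 1))))
    (hPolish : ∀ i, PolishSpace (A i))
    (hSigma : ∀ B : Set X, MeasurableSet B ↔
      ∀ i, MeasurableSet[borel (A i)] (Subtype.val ⁻¹' B : Set (A i)))
    (hPhi : ∀ i, ∃ Φ : ℕ → (A i → ℝ),
      (∀ n, Continuous (Φ n)) ∧ (∀ n, ∃ M, ∀ a, |Φ n a| ≤ M) ∧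
      ∀ a b : A i, a ≠ b → ∃ n, Φ n a ≠ Φ n b)
    (S : X → Set (IPath X))
    (hS1a : ∀ x, (S x).Nonempty)
    (hS1b : ∀ x, IsCompact (S x))
    (hS1c : ∀ x, ∀ w ∈ S x, w 0 = x)
    (hS2 : ∀ C : Set (IPath X), LimitClosed A C →
      MeasurableSet {x | (S x ∩ C).Nonempty})
    (hS3 : ∀ x, ∀ w ∈ S x, ∀ s : ℝ≥0, shift s w ∈ S (w s))
    (hS4 : ∀ x, ∀ w ∈ S x, ∀ s : ℝ≥0, ∀ v, ∀ hv : v ∈ S (w s),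
      splice s w v ((hS1c _ v hv).symm) ∈ S x)
    (hk : ∀ i, ∃ k, i ≤ k ∧ ∀ x ∈ A i, ∀ w ∈ S x, range ⇑w ⊆ A k) :
    ∃ u : X → IPath X,
      (∀ C : Set (IPath X), LimitClosed A C → MeasurableSet (u ⁻¹' C)) ∧
      (∀ x, u x ∈ S x) ∧
      ∀ x, ∀ t₁ t₂ : ℝ≥0, u (u x t₁) t₂ = u x (t₁ + t₂) :=
  generalized_semiflow_selection_general A hmono hcover hfinal hstep hPolish hPhi S hS1a hS1b hS1c
    hS2 hS3 hS4 hk
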